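/- If X ∼ P_X is centrally symmetric about μ ∈ H (i.e., X − μ has the same distribution as μ − X), then the regularized projection depth is centrally symmetric about μ: D_β(x; P_X) = D_β(2μ − x; P_X) for all x ∈ H. Moreover D_β attains its maximum value 1 at μ. -/

import Mathlib

open MeasureTheory Filter
open scoped RealInnerProductSpace ENNReal

noncomputable section

/-- The set of medians of a real random variable `Z`. -/
def medianSet {Ω : Type*} [MeasureSpace Ω] (Z : Ω → ℝ) : Set ℝ :=
  {m : ℝ | volume {ω | Z ω ≤ m} ≥ 1/2 ∧ volume {ω | m ≤ Z ω} ≥ 1/2}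

/-- The median (midpoint-of-medians convention) of a real random variable. -/
def med {Ω : Type*} [MeasureSpace Ω] (Z : Ω → ℝ) : ℝ :=
  (sInf (medianSet Z) + sSup (medianSet Z)) / 2

/-- The median absolute deviation of a real random variable. -/
def mad {Ω : Type*} [MeasureSpace Ω] (Z : Ω → ℝ) : ℝ :=
  med (fun ω => |Z ω - med Z|)

/-- The regularized direction set `V_β`. -/
def dirSet {Ω : Type*} [MeasureSpace Ω] {H : Type*} [NormedAddCommGroup H]
    [InnerProductSpace ℝ H] (X : Ω → H) (β : ℝ) : Set H :=
  {v : H | ‖v‖ = 1 ∧ β ≤ mad (fun ω => ⟪X ω, v⟫)}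

/-- The projection outlyingness `O_v(x; P_X)`. -/
def outl {Ω : Type*} [MeasureSpace Ω] {H : Type*} [NormedAddCommGroup H]
    [InnerProductSpace ℝ H] (X : Ω → H) (v x : H) : ℝ :=
  |⟪x, v⟫ - med (fun ω => ⟪X ω, v⟫)| / mad (fun ω => ⟪X ω, v⟫)

/-- The regularized projection depth `D_β(x; P_X)`. -/
def RPD {Ω : Type*} [MeasureSpace Ω] {H : Type*} [NormedAddCommGroup H]
    [InnerProductSpace ℝ H] (X : Ω → H) (β : ℝ) (x : H) : ℝ :=
  ⨅ v : dirSet X β, (1 + outl X v x)⁻¹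

end

/-! Central symmetry of `X` about `μ` makes every projection `⟪X, v⟫` symmetric about `⟪μ, v⟫`.
The median set of a symmetric real variable is symmetric about the centre, contains it, and is
bounded, so the midpoint of its infimum and supremum is the centre: `med ⟪X, v⟫ = ⟪μ, v⟫`.
Hence each outlyingness `O_v` is invariant under `x ↦ 2μ - x` and vanishes at `μ`. -/

open ProbabilityTheory Topology

section Median

lemma tendsto_measure_le_atBot {Ω : Type*} [MeasurableSpace Ω] {P : Measure Ω}
    [IsFiniteMeasure P] {Z : Ω → ℝ} (hZ : AEMeasurable Z P) :
    Tendsto (fun a => P {ω | Z ω ≤ a}) atBot (𝓝 0) := by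
  have hempty : (⋂ a : ℝ, {ω | Z ω ≤ a}) = ∅ :=
    Set.eq_empty_of_forall_notMem fun ω hω => by
      have : Z ω ≤ Z ω - 1 := Set.mem_iInter.mp hω _
      linarith
  have h := tendsto_measure_iInter_atBot (μ := P) (s := fun a : ℝ => {ω | Z ω ≤ a})
    (fun a => hZ.nullMeasurable measurableSet_Iic) (fun a b hab ω hω => le_trans hω hab)
    ⟨0, measure_ne_top P _⟩
  rwa [hempty, measure_empty] at h

variable {Ω : Type*} [MeasureSpace Ω] {Z : Ω → ℝ} {c : ℝ}

lemma medianSet_bddBelow [IsFiniteMeasure (volume : Measure Ω)] (hZ : AEMeasurable Z) :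
    BddBelow (medianSet Z) := by
  obtain ⟨a, ha⟩ := ((tendsto_measure_le_atBot hZ).eventually
    (gt_mem_nhds (by norm_num : (0 : ℝ≥0∞) < 1 / 2))).exists
  refine ⟨a, fun m hm => le_of_not_ge fun hma => ?_⟩
  exact (hm.1.trans (measure_mono fun ω hω => le_trans hω hma)).not_gt ha

lemma volume_le_eq_volume_two_mul_sub_le (h : IdentDistrib Z (fun ω => 2 * c - Z ω)) (t : ℝ) :
    volume {ω | Z ω ≤ t} = volume {ω | 2 * c - t ≤ Z ω} := by
  rw [show {ω | 2 * c - t ≤ Z ω} = (fun ω => 2 * c - Z ω) ⁻¹' Set.Iic t from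
    Set.ext fun ω => (sub_le_comm (a := 2 * c) (b := Z ω) (c := t)).symm]
  exact h.measure_mem_eq measurableSet_Iic

lemma two_mul_sub_mem_medianSet (h : IdentDistrib Z (fun ω => 2 * c - Z ω)) {m : ℝ}
    (hm : m ∈ medianSet Z) : 2 * c - m ∈ medianSet Z := by
  refine ⟨?_, ?_⟩
  · rw [volume_le_eq_volume_two_mul_sub_le h, sub_sub_cancel]
    exact hm.2
  · rw [← volume_le_eq_volume_two_mul_sub_le h]
    exact hm.1

lemma mem_medianSet_of_identDistrib [IsProbabilityMeasure (volume : Measure Ω)]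
    (h : IdentDistrib Z (fun ω => 2 * c - Z ω)) : c ∈ medianSet Z := by
  have htails : volume {ω | Z ω ≤ c} = volume {ω | c ≤ Z ω} := by
    rw [volume_le_eq_volume_two_mul_sub_le h c, two_mul, add_sub_cancel_right]
  have hunion : {ω | Z ω ≤ c} ∪ {ω | c ≤ Z ω} = Set.univ :=
    Set.eq_univ_of_forall fun ω => le_total (Z ω) c
  have hcover : 1 ≤ 2 * volume {ω | Z ω ≤ c} :=
    calc 1 = volume ({ω | Z ω ≤ c} ∪ {ω | c ≤ Z ω}) := by rw [hunion, measure_univ]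
      _ ≤ volume {ω | Z ω ≤ c} + volume {ω | c ≤ Z ω} := measure_union_le _ _
      _ = 2 * volume {ω | Z ω ≤ c} := by rw [← htails, two_mul]
  have hhalf : 1 / 2 ≤ volume {ω | Z ω ≤ c} :=
    ENNReal.div_le_of_le_mul (by rwa [mul_comm])
  exact ⟨hhalf, htails ▸ hhalf⟩

lemma sInf_add_sSup_of_forall_two_mul_sub_mem {S : Set ℝ} (hne : S.Nonempty) (hbdd : BddBelow S)
    (hS : ∀ m ∈ S, 2 * c - m ∈ S) : sInf S + sSup S = 2 * c := by
  have hle : ∀ m ∈ S, m ≤ 2 * c - sInf S := fun m hm => by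
    linarith [csInf_le hbdd (hS m hm)]
  have hsup : sSup S ≤ 2 * c - sInf S := csSup_le hne hle
  have hinf : 2 * c - sSup S ≤ sInf S :=
    le_csInf hne fun m hm => by linarith [le_csSup ⟨_, hle⟩ (hS m hm)]
  linarith

lemma med_eq_of_identDistrib [IsProbabilityMeasure (volume : Measure Ω)]
    (h : IdentDistrib Z (fun ω => 2 * c - Z ω)) : med Z = c := by
  have := sInf_add_sSup_of_forall_two_mul_sub_mem ⟨c, mem_medianSet_of_identDistrib h⟩
    (medianSet_bddBelow h.aemeasurable_fst) fun m => two_mul_sub_mem_medianSet h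
  rw [med, this]
  ring

end Median

section Depth

variable {Ω : Type*} {H : Type*} [NormedAddCommGroup H] [InnerProductSpace ℝ H]

lemma identDistrib_inner_two_mul_sub [MeasurableSpace Ω] [MeasurableSpace H] [BorelSpace H]
    {P : Measure Ω} {X : Ω → H} {μ : H} (hX : AEMeasurable X P)
    (hsym : P.map (fun ω => X ω - μ) = P.map (fun ω => μ - X ω)) (v : H) :
    IdentDistrib (fun ω => ⟪X ω, v⟫) (fun ω => 2 * ⟪μ, v⟫ - ⟪X ω, v⟫) P P := by
  have hXμ : IdentDistrib (fun ω => X ω - μ) (fun ω => μ - X ω) P P :=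
    ⟨hX.sub_const μ, hX.const_sub μ, hsym⟩
  convert hXμ.comp (u := fun y => ⟪y, v⟫ + ⟪μ, v⟫) (by fun_prop) using 1 <;>
    · funext ω
      simp only [Function.comp_apply, inner_sub_left]
      ring

variable [MeasureSpace Ω] {X : Ω → H} {β : ℝ} {μ : H}

lemma outl_nonneg (hβ : 0 ≤ β) {v : H} (hv : v ∈ dirSet X β) (x : H) : 0 ≤ outl X v x :=
  div_nonneg (abs_nonneg _) (hβ.trans hv.2)

lemma outl_two_smul_sub {v : H} (hmed : med (fun ω => ⟪X ω, v⟫) = ⟪μ, v⟫) (x : H) :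
    outl X v ((2 : ℝ) • μ - x) = outl X v x := by
  rw [outl, outl, hmed, inner_sub_left, real_inner_smul_left, ← abs_neg]
  ring_nf

lemma RPD_two_smul_sub (hmed : ∀ v, med (fun ω => ⟪X ω, v⟫) = ⟪μ, v⟫) (x : H) :
    RPD X β ((2 : ℝ) • μ - x) = RPD X β x := by
  simp only [RPD, outl_two_smul_sub (hmed _)]

lemma RPD_eq_one (hne : (dirSet X β).Nonempty) (hmed : ∀ v, med (fun ω => ⟪X ω, v⟫) = ⟪μ, v⟫) :
    RPD X β μ = 1 := by
  have : Nonempty (dirSet X β) := hne.to_subtype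
  simp [RPD, outl, hmed]

lemma RPD_le_one (hβ : 0 ≤ β) (hne : (dirSet X β).Nonempty) (x : H) : RPD X β x ≤ 1 := by
  have hge : ∀ w : dirSet X β, 1 ≤ 1 + outl X w x := fun w =>
    le_add_of_nonneg_right (outl_nonneg hβ w.2 x)
  obtain ⟨v, hv⟩ := hne
  refine ciInf_le_of_le ⟨0, ?_⟩ ⟨v, hv⟩ (inv_le_one_of_one_le₀ (hge _))
  rintro _ ⟨w, rfl⟩
  exact inv_nonneg.mpr (zero_le_one.trans (hge w))

end Depth

/-- If `X` is centrally symmetric about `μ` (i.e. `X - μ ≐ μ - X`), then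
`D_β(x;P_X) = D_β(2μ - x;P_X)` for all `x`, and `D_β` attains its maximal value `1` at `μ`. -/
theorem rpd_centrally_symmetric
    {Ω : Type*} [MeasureSpace Ω] [IsProbabilityMeasure (volume : Measure Ω)]
    {H : Type*} [NormedAddCommGroup H] [InnerProductSpace ℝ H]
    [MeasurableSpace H] [BorelSpace H]
    (X : Ω → H) (hX : Measurable X) (μ : H)
    (hsym : Measure.map (fun ω => X ω - μ) volume = Measure.map (fun ω => μ - X ω) volume)
    (β : ℝ) (hβ : 0 ≤ β) (hne : (dirSet X β).Nonempty) :
    (∀ x : H, RPD X β x = RPD X β ((2 : ℝ) • μ - x)) ∧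
      RPD X β μ = 1 ∧ ∀ x : H, RPD X β x ≤ 1 := by
  have hmed : ∀ v, med (fun ω => ⟪X ω, v⟫) = ⟪μ, v⟫ := fun v =>
    med_eq_of_identDistrib (identDistrib_inner_two_mul_sub hX.aemeasurable hsym v)
  exact ⟨fun x => (RPD_two_smul_sub hmed x).symm, RPD_eq_one hne hmed, RPD_le_one hβ hne⟩
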